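/- Let w be a nonzero real number and n a natural number. For each integer N ≥ n set q_N = exp(2w/N). Then lim_{N→∞} (2/N)^n e^{2wn} [N choose n]_{q_N} = ((e^{4w} − 1)/(2w))^n / n!, where [N choose n]_{q_N} is the symmetric q-binomial coefficient evaluated at q = q_N. (This is the high-spin j = N/2 → ∞ contraction, with q = e^{w/j}, of the coefficients q^{nj} [2j choose n]_q^{1/2} appearing in the SU_q(2) coherent state, yielding the coefficients ((e^{2pw}−1)/(2w))^{n/2}/√(n!) of the coherent state of the quantum Heisenberg group H_q(1).) -/

import Mathlib

/-- The symmetric q-integer `[m]_q = (q^m − q^{−m})/(q − q^{−1})`. -/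
noncomputable def qIntSym (q : ℝ) (m : ℕ) : ℝ := (q ^ (m : ℤ) - q ^ (-(m : ℤ))) / (q - q⁻¹)

/-- The symmetric q-factorial `[n]_q! = ∏_{i=1}^{n} [i]_q`. -/
noncomputable def qFactSym (q : ℝ) (n : ℕ) : ℝ := ∏ i ∈ Finset.range n, qIntSym q (i + 1)

/-- The q-binomial coefficient `[N choose n]_q = [N]_q!/([n]_q! [N−n]_q!)`. -/
noncomputable def qBinomSym (q : ℝ) (N n : ℕ) : ℝ :=
  qFactSym q N / (qFactSym q n * qFactSym q (N - n))

/-!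
With `q = e^t` the symmetric q-integers are `[m]_q = sinh (m t) / sinh t`, and for `N = k + n`
the normalised coefficient `(2/N)^n e^{2wn} [N choose n]_q` is the product over `i < n` of
`(2/N) e^{2w} sinh ((k+i+1) t) / sinh ((i+1) t)` with `t = 2w/N`. Since `N t = 2w`, the `i`-th
factor is a function of `t` alone, `e^{2w}/w · sinh (2w + (i+1-n) t) · t / sinh ((i+1) t)`,
which tends to `e^{2w} sinh (2w) / ((i+1) w) = (e^{4w} - 1) / (2w (i+1))` as `t → 0`.
-/

open Filter Finset Real Topology

theorem qIntSym_exp (t : ℝ) (m : ℕ) : qIntSym (exp t) m = sinh (m * t) / sinh t := by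
  rw [qIntSym, zpow_neg, zpow_natCast, ← exp_nat_mul, ← exp_neg, ← exp_neg, sinh_eq, sinh_eq,
    div_div_div_cancel_right₀ two_ne_zero]

theorem qIntSym_exp_div {t : ℝ} (ht : t ≠ 0) (m k : ℕ) :
    qIntSym (exp t) m / qIntSym (exp t) k = sinh (m * t) / sinh (k * t) := by
  rw [qIntSym_exp, qIntSym_exp, div_div_div_cancel_right₀ (sinh_eq_zero.not.mpr ht)]

theorem qFactSym_exp_ne_zero {t : ℝ} (ht : t ≠ 0) (m : ℕ) : qFactSym (exp t) m ≠ 0 := by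
  refine prod_ne_zero_iff.mpr fun i _ => ?_
  rw [qIntSym_exp]
  exact div_ne_zero (sinh_eq_zero.not.mpr (mul_ne_zero (by positivity) ht))
    (sinh_eq_zero.not.mpr ht)

theorem qFactSym_add (q : ℝ) (a b : ℕ) :
    qFactSym q (a + b) = qFactSym q a * ∏ i ∈ range b, qIntSym q (a + i + 1) := by
  simp only [qFactSym, prod_range_add, add_assoc]

theorem qBinomSym_add_right (q : ℝ) (a b : ℕ) (ha : qFactSym q a ≠ 0) :
    qBinomSym q (a + b) b = ∏ i ∈ range b, qIntSym q (a + i + 1) / qIntSym q (i + 1) := by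
  rw [qBinomSym, Nat.add_sub_cancel, qFactSym_add, mul_comm (qFactSym q b),
    mul_div_mul_left _ _ ha, qFactSym, prod_div_distrib]

theorem tendsto_div_sinh_mul {b : ℝ} (hb : b ≠ 0) :
    Tendsto (fun t => t / sinh (b * t)) (𝓝[≠] 0) (𝓝 b⁻¹) := by
  have hderiv : HasDerivAt (fun t => sinh (b * t)) b 0 := by
    simpa using ((hasDerivAt_id 0).const_mul b).sinh
  refine (hderiv.tendsto_slope_zero.inv₀ hb).congr fun t => ?_
  simp [inv_mul_eq_div]

theorem tendsto_exp_mul_sinh_mul_div_sinh (w d : ℝ) {b : ℝ} (hb : b ≠ 0) :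
    Tendsto (fun t => exp (2 * w) / w * sinh (2 * w + d * t) * (t / sinh (b * t))) (𝓝[≠] 0)
      (𝓝 ((exp (4 * w) - 1) / (2 * w) / b)) := by
  have hsinh : Tendsto (fun t => sinh (2 * w + d * t)) (𝓝[≠] 0) (𝓝 (sinh (2 * w))) := by
    refine tendsto_nhdsWithin_of_tendsto_nhds (Continuous.tendsto' (by fun_prop) _ _ ?_)
    simp
  convert ((hsinh.const_mul (exp (2 * w) / w)).mul (tendsto_div_sinh_mul hb)) using 2
  have hexp : exp (4 * w) = exp (2 * w) * exp (2 * w) := by rw [← exp_add]; ring_nf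
  rw [sinh_eq, hexp, exp_neg]
  field_simp

theorem two_div_pow_mul_exp_mul_qBinomSym {w : ℝ} (hw : w ≠ 0) {k n : ℕ} (hkn : 0 < k + n) :
    (2 / ((k + n : ℕ) : ℝ)) ^ n * exp (2 * w * n) * qBinomSym (exp (2 * w / (k + n : ℕ))) (k + n) n
      = ∏ i ∈ range n, exp (2 * w) / w * sinh (2 * w + ((i : ℝ) + 1 - n) * (2 * w / (k + n : ℕ)))
          * (2 * w / (k + n : ℕ) / sinh (((i : ℝ) + 1) * (2 * w / (k + n : ℕ)))) := by
  set N : ℝ := ((k + n : ℕ) : ℝ) with hN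
  have hN0 : N ≠ 0 := by positivity
  set t := 2 * w / N with ht
  have ht0 : t ≠ 0 := by positivity
  rw [qBinomSym_add_right _ _ _ (qFactSym_exp_ne_zero ht0 k), mul_comm (2 * w), exp_nat_mul,
    ← mul_pow, pow_eq_prod_const, ← prod_mul_distrib]
  refine prod_congr rfl fun i _ => ?_
  have hshift : ((k + i + 1 : ℕ) : ℝ) * t = 2 * w + ((i : ℝ) + 1 - n) * t := by
    rw [ht]; field_simp; rw [hN]; push_cast; ring
  rw [qIntSym_exp_div ht0, hshift, Nat.cast_add_one, ht]
  field_simp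

/-- the high-spin `j = N/2 → ∞` contraction, with `q_N = e^{2w/N}`:
`lim_{N→∞} (2/N)^n e^{2wn} [N choose n]_{q_N} = ((e^{4w} − 1)/(2w))^n / n!`. -/
theorem high_spin_limit_qbinom (w : ℝ) (hw : w ≠ 0) (n : ℕ) :
    Filter.Tendsto
      (fun N : ℕ => (2 / (N : ℝ)) ^ n * Real.exp (2 * w * n) *
        qBinomSym (Real.exp (2 * w / N)) N n)
      Filter.atTop
      (nhds (((Real.exp (4 * w) - 1) / (2 * w)) ^ n / (n.factorial : ℝ))) := by
  have hfactors := tendsto_finsetProd (range n) fun (i : ℕ) _ =>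
    tendsto_exp_mul_sinh_mul_div_sinh w ((i : ℝ) + 1 - n) (Nat.cast_add_one_ne_zero i)
  have hfactorial : ∏ i ∈ range n, ((i : ℝ) + 1) = (n.factorial : ℝ) := by
    rw [← prod_range_add_one_eq_factorial]
    push_cast
    rfl
  rw [prod_div_distrib, prod_const, card_range, hfactorial] at hfactors
  have hstep : Tendsto (fun k : ℕ => 2 * w / ((k + n : ℕ) : ℝ)) atTop (𝓝[≠] 0) := by
    refine tendsto_nhdsWithin_iff.mpr ⟨?_, ?_⟩
    · exact tendsto_const_nhds.div_atTop
        (tendsto_natCast_atTop_atTop.comp (tendsto_add_atTop_nat n))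
    · filter_upwards [eventually_gt_atTop 0] with k hk
      simp only [Set.mem_compl_iff, Set.mem_singleton_iff]
      positivity
  rw [← tendsto_add_atTop_iff_nat n]
  refine (hfactors.comp hstep).congr' ?_
  filter_upwards [eventually_gt_atTop 0] with k hk
  exact (two_div_pow_mul_exp_mul_qBinomSym hw (by omega)).symm
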